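/- For every temperature 0 < τ ≤ 1, the binary self-training loss ℓ_τ(m) = −σ(m/τ)·log σ(m) − (1 − σ(m/τ))·log(1 − σ(m)) is strictly decreasing on [0, ∞), and attains its global maximum over ℝ at m = 0 with value ℓ_τ(0) = log 2. -/

import Mathlib

open Real

/-- The logistic sigmoid `σ t = 1 / (1 + exp (−t))`. -/
noncomputable def sigmoid (t : ℝ) : ℝ := 1 / (1 + Real.exp (-t))

/-- The binary self-training loss at margin `m` with temperature `τ`:
`ℓ_τ(m) = −σ(m/τ)·log σ(m) − (1 − σ(m/τ))·log (1 − σ(m))`. -/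
noncomputable def selfTrainLoss (τ m : ℝ) : ℝ :=
  -_root_.sigmoid (m / τ) * Real.log (_root_.sigmoid m)
    - (1 - _root_.sigmoid (m / τ)) * Real.log (1 - _root_.sigmoid m)

/-!
Since `log σ(m) = -log (1 + e^{-m})` and `1 - σ(m) = σ(-m)`, the loss is
`ℓ_τ(m) = log (1 + e^{-m}) + m σ(-m/τ)`, which is even because
`log (1 + e^m) = m + log (1 + e^{-m})`. Its derivative `σ(-m/τ) - σ(-m) - m σ'(m/τ)/τ` is negative
for `m > 0`: the difference is `≤ 0` because `m ≤ m/τ` when `τ ≤ 1`, and the last term is positive.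
By evenness, the maximum is at `0`.
-/

theorem sigmoid_eq_real_sigmoid : _root_.sigmoid = Real.sigmoid :=
  funext fun _ => one_div _

theorem Real.log_sigmoid (t : ℝ) : log (Real.sigmoid t) = -log (1 + exp (-t)) := by
  rw [Real.sigmoid_def, log_inv]

theorem Real.log_one_add_exp (t : ℝ) : log (1 + exp t) = t + log (1 + exp (-t)) := by
  have : 1 + exp t = exp t * (1 + exp (-t)) := by
    rw [mul_add, mul_one, ← exp_add, add_neg_cancel, exp_zero, add_comm]
  rw [this, log_mul (exp_ne_zero t) (by positivity), log_exp]

theorem Real.hasDerivAt_log_one_add_exp_neg (t : ℝ) :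
    HasDerivAt (fun s => log (1 + exp (-s))) (-Real.sigmoid (-t)) t := by
  convert ((hasDerivAt_neg' t).exp.const_add 1).log (by positivity) using 1
  rw [← Real.sigmoid_mul_rexp_neg, Real.sigmoid_def]
  ring

theorem selfTrainLoss_eq (τ m : ℝ) :
    selfTrainLoss τ m = log (1 + exp (-m)) + m * Real.sigmoid (-(m / τ)) := by
  rw [selfTrainLoss, sigmoid_eq_real_sigmoid, ← Real.sigmoid_neg, ← Real.sigmoid_neg,
    Real.log_sigmoid, Real.log_sigmoid, neg_neg, Real.log_one_add_exp m, Real.sigmoid_neg]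
  ring

theorem selfTrainLoss_neg (τ m : ℝ) : selfTrainLoss τ (-m) = selfTrainLoss τ m := by
  rw [selfTrainLoss_eq, selfTrainLoss_eq, neg_neg, Real.log_one_add_exp, neg_div, neg_neg,
    Real.sigmoid_neg]
  ring

theorem selfTrainLoss_zero (τ : ℝ) : selfTrainLoss τ 0 = log 2 := by
  norm_num [selfTrainLoss_eq]

theorem hasDerivAt_selfTrainLoss (τ m : ℝ) :
    HasDerivAt (selfTrainLoss τ)
      (Real.sigmoid (-(m / τ)) - Real.sigmoid (-m)
        - m * (Real.sigmoid (m / τ) * Real.sigmoid (-(m / τ))) / τ) m := by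
  have hsig : HasDerivAt (fun t => Real.sigmoid (-(t / τ)))
      (Real.sigmoid (-(m / τ)) * (1 - Real.sigmoid (-(m / τ))) * -(1 / τ)) m :=
    (hasDerivAt_sigmoid _).comp m ((hasDerivAt_id m).div_const τ).neg
  rw [show selfTrainLoss τ = _ from funext (selfTrainLoss_eq τ)]
  refine ((Real.hasDerivAt_log_one_add_exp_neg m).add ((hasDerivAt_id m).mul hsig)).congr_deriv ?_
  rw [← Real.sigmoid_neg, neg_neg, id]
  ring

theorem selfTrainLoss_strictAntiOn {τ : ℝ} (hτ0 : 0 < τ) (hτ1 : τ ≤ 1) :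
    StrictAntiOn (selfTrainLoss τ) (Set.Ici 0) := by
  refine strictAntiOn_of_hasDerivWithinAt_neg (convex_Ici 0)
    (fun m _ => (hasDerivAt_selfTrainLoss τ m).continuousAt.continuousWithinAt)
    (fun m _ => (hasDerivAt_selfTrainLoss τ m).hasDerivWithinAt) fun m hm => ?_
  rw [interior_Ici, Set.mem_Ioi] at hm
  have hflat : Real.sigmoid (-(m / τ)) ≤ Real.sigmoid (-m) :=
    Real.sigmoid_le (neg_le_neg (le_div_self hm.le hτ0 hτ1))
  have hslope : 0 < m * (Real.sigmoid (m / τ) * Real.sigmoid (-(m / τ))) / τ := by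
    have := Real.sigmoid_pos (m / τ)
    have := Real.sigmoid_pos (-(m / τ))
    positivity
  linarith

theorem selfTrainLoss_abs (τ m : ℝ) : selfTrainLoss τ |m| = selfTrainLoss τ m := by
  rcases abs_choice m with h | h <;> rw [h]
  exact selfTrainLoss_neg τ m

theorem selfTrainLoss_le_selfTrainLoss_zero {τ : ℝ} (hτ0 : 0 < τ) (hτ1 : τ ≤ 1) (m : ℝ) :
    selfTrainLoss τ m ≤ selfTrainLoss τ 0 := by
  rw [← selfTrainLoss_abs]
  exact (selfTrainLoss_strictAntiOn hτ0 hτ1).antitoneOn Set.self_mem_Ici (abs_nonneg m)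
    (abs_nonneg m)

/-- For `0 < τ ≤ 1`, the binary self-training loss is strictly decreasing on `[0, ∞)` and
attains its global maximum over `ℝ` at `m = 0`, with value `ℓ_τ(0) = log 2`. -/
theorem stmt9 (τ : ℝ) (hτ0 : 0 < τ) (hτ1 : τ ≤ 1) :
    StrictAntiOn (selfTrainLoss τ) (Set.Ici 0) ∧
      (∀ m : ℝ, selfTrainLoss τ m ≤ selfTrainLoss τ 0) ∧
      selfTrainLoss τ 0 = Real.log 2 :=
  ⟨selfTrainLoss_strictAntiOn hτ0 hτ1, selfTrainLoss_le_selfTrainLoss_zero hτ0 hτ1, selfTrainLoss_zero τ⟩
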